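/- Let 1 ≤ i ≤ m−1 with v_2(i) = v_2(m), and let d = gcd(m+i, 2m). Then d is even, and for every ξ ∈ F_{2^n} with ξ^{2^d} = ξ, ξ^{2^{d/2}+1} = 1, and ξ ≠ 1, setting a = (1+ξ)^{−1} one has a^{2^m} ≠ a (i.e. a ∉ K_m), and a^{2^i}·y^{2^{2i}} + (a + a^{2^m})^{2^i}·y^{2^{m+i}} + a·y = 0 for every y ∈ F_{2^n} with y^{2^d} = y. -/
import Mathlib


open scoped Classical BigOperators

noncomputable section

/-- The finite field with `2^k` elements. -/
abbrev GF (k : ℕ) := GaloisField 2 k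

noncomputable instance (k : ℕ) : Fintype (GF k) := Fintype.ofFinite _

/-- The absolute trace `Tr_{2^k/2}`, viewed as an element of `GF k`
(its values lie in the prime field `{0,1}`). -/
def atr (k : ℕ) (x : GF k) : GF k := ∑ j ∈ Finset.range k, x ^ 2 ^ j

/-- `(-1)^b` for `b ∈ {0,1} ⊆ GF k`. -/
def chi (k : ℕ) (x : GF k) : ℤ := if x = 0 then 1 else -1

/-- The Walsh transform of a Boolean-valued function `f` on `GF k`
(`f` takes values in the prime field `{0,1}`). -/
def walsh (k : ℕ) (f : GF k → GF k) (ω : GF k) : ℤ :=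
  ∑ x : GF k, chi k (f x + atr k (ω * x))

/-- The trace `Tr_{2^m/2}` of the subfield `K_m ⊆ GF (2*m)`, viewed inside `GF (2*m)`. -/
def trKm (m : ℕ) (x : GF (2*m)) : GF (2*m) := ∑ j ∈ Finset.range m, x ^ 2 ^ j

/-- The subfield `K_m = {x : x^(2^m) = x}` of `GF (2*m)`, as a finset. -/
def Km (m : ℕ) : Finset (GF (2*m)) := Finset.univ.filter (fun x => x ^ 2 ^ m = x)

/-- `max_{a ≠ 0, ω} |W_{F_a}(ω)|` for a vectorial function `F` on `GF (2*m)`. -/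
def maxAbsW (m : ℕ) (F : GF (2*m) → GF (2*m)) : ℕ :=
  Finset.sup ((Finset.univ.filter (fun a : GF (2*m) => a ≠ 0)) ×ˢ (Finset.univ : Finset (GF (2*m))))
    (fun p => (walsh (2*m) (fun x => atr (2*m) (p.1 * F x)) p.2).natAbs)

/-- The nonlinearity `N_F = 2^(n-1) - (1/2) max_{a ≠ 0, ω} |W_{F_a}(ω)|`, `n = 2m`. -/
def nlin (m : ℕ) (F : GF (2*m) → GF (2*m)) : ℚ :=
  2 ^ (2*m - 1) - (maxAbsW m F : ℚ) / 2

/- ---------- auxiliary lemmas ---------- -/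

lemma pow_pow_two' {F : Type*} [Monoid F] (x : F) (a b : ℕ) :
    (x ^ 2 ^ a) ^ 2 ^ b = x ^ 2 ^ (a + b) := by
  rw [← pow_mul, ← pow_add]

lemma fixed_pow_mul {F : Type*} [Monoid F] (x : F) (d : ℕ) (hx : x ^ 2 ^ d = x) :
    ∀ k, x ^ 2 ^ (d * k) = x := by
  intro k
  induction k with
  | zero => simp
  | succ n ih => rw [Nat.mul_succ, ← pow_pow_two', ih, hx]

lemma fixed_of_dvd {F : Type*} [Monoid F] (x : F) {d N : ℕ} (hdN : d ∣ N)
    (hx : x ^ 2 ^ d = x) : x ^ 2 ^ N = x := by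
  obtain ⟨k, rfl⟩ := hdN
  exact fixed_pow_mul x d hx k

lemma frob_pow_inj {F : Type*} [Field F] [CharP F 2] {x y : F} (k : ℕ)
    (h : x ^ 2 ^ k = y ^ 2 ^ k) : x = y := by
  have h2 : (x - y) ^ 2 ^ k = 0 := by
    rw [sub_pow_char_pow, h, sub_self]
  have h3 : x - y = 0 := (pow_eq_zero_iff (by positivity)).mp h2
  exact sub_eq_zero.mp h3

lemma nat_bezout (d m : ℕ) (hd : 0 < d) (hm : 0 < m) :
    ∃ u v : ℕ, u * d = Nat.gcd d m + v * m := by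
  have hg : (Nat.gcd d m : ℤ) = d * Nat.gcdA d m + m * Nat.gcdB d m := Nat.gcd_eq_gcd_ab d m
  set A := Nat.gcdA d m with hA
  set B := Nat.gcdB d m with hB
  set t : ℤ := ((A.natAbs + B.natAbs + 1 : ℕ) : ℤ) with ht
  have hm1 : (1 : ℤ) ≤ (m : ℤ) := by exact_mod_cast hm
  have hd1 : (1 : ℤ) ≤ (d : ℤ) := by exact_mod_cast hd
  have htpos : 0 < t := by positivity
  have htA : (A.natAbs : ℤ) ≤ t := by rw [ht]; exact Nat.cast_le.mpr (by omega)
  have htB : (B.natAbs : ℤ) ≤ t := by rw [ht]; exact Nat.cast_le.mpr (by omega)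
  have habsA : -(A.natAbs : ℤ) ≤ A := by
    rcases Int.natAbs_eq A with h | h <;> omega
  have habsB : B ≤ (B.natAbs : ℤ) := by
    rcases Int.natAbs_eq B with h | h <;> omega
  have h1 : 0 ≤ A + t * m := by
    have h' : t ≤ t * m := le_mul_of_one_le_right htpos.le hm1
    linarith
  have h2 : 0 ≤ t * d - B := by
    have h' : t ≤ t * d := le_mul_of_one_le_right htpos.le hd1
    linarith
  refine ⟨(A + t * m).toNat, (t * d - B).toNat, ?_⟩
  have key : ((A + t * m).toNat : ℤ) * d = (Nat.gcd d m : ℤ) + ((t * d - B).toNat : ℤ) * m := by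
    rw [Int.toNat_of_nonneg h1, Int.toNat_of_nonneg h2]
    linear_combination -hg
  exact_mod_cast key

lemma fixed_gcd {F : Type*} [Field F] [CharP F 2] (x : F) {dd mm : ℕ}
    (hdd : 0 < dd) (hmm : 0 < mm)
    (h1 : x ^ 2 ^ dd = x) (h2 : x ^ 2 ^ mm = x) : x ^ 2 ^ Nat.gcd dd mm = x := by
  obtain ⟨u, v, huv⟩ := nat_bezout dd mm hdd hmm
  have ha : x ^ 2 ^ (dd * u) = x := fixed_pow_mul x dd h1 u
  have hb : x ^ 2 ^ (mm * v) = x := fixed_pow_mul x mm h2 v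
  have hexp : Nat.gcd dd mm + mm * v = dd * u := by
    rw [Nat.mul_comm dd u, Nat.mul_comm mm v]; omega
  have hmain : (x ^ 2 ^ Nat.gcd dd mm) ^ 2 ^ (mm * v) = x ^ 2 ^ (mm * v) := by
    rw [pow_pow_two', hexp, ha, hb]
  exact frob_pow_inj (mm * v) hmain

lemma key_nt (m i : ℕ) (hi1 : 1 ≤ i) (him : i < m)
    (hv : padicValNat 2 i = padicValNat 2 m) :
    Nat.gcd (m + i) (2 * m) = 2 * Nat.gcd i m := by
  have hi0 : i ≠ 0 := by omega
  have hm0 : m ≠ 0 := by omega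
  have hdvi : 2 ^ padicValNat 2 m ∣ i := by rw [← hv]; exact pow_padicValNat_dvd
  have hdvm : 2 ^ padicValNat 2 m ∣ m := pow_padicValNat_dvd
  have hndvi : ¬ 2 ^ (padicValNat 2 m + 1) ∣ i := by
    rw [← hv]; exact pow_succ_padicValNat_not_dvd hi0
  have hndvm : ¬ 2 ^ (padicValNat 2 m + 1) ∣ m := pow_succ_padicValNat_not_dvd hm0
  generalize hgen : padicValNat 2 m = v at hdvi hdvm hndvi hndvm
  apply Nat.dvd_antisymm
  · have h1 : Nat.gcd (m + i) (2*m) ∣ 2*(m+i) :=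
      dvd_mul_of_dvd_right (Nat.gcd_dvd_left _ _) 2
    have h2 : Nat.gcd (m + i) (2*m) ∣ 2*m := Nat.gcd_dvd_right _ _
    have h3 : Nat.gcd (m + i) (2*m) ∣ 2*i := by
      have h4 := Nat.dvd_sub h1 h2
      have h5 : 2*(m+i) - 2*m = 2*i := by omega
      rwa [h5] at h4
    have h6 := Nat.dvd_gcd h3 h2
    rwa [Nat.gcd_mul_left] at h6
  · apply Nat.dvd_gcd
    · obtain ⟨i', hi'⟩ := hdvi
      obtain ⟨m', hm'⟩ := hdvm
      have hoi : ¬ 2 ∣ i' := by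
        rintro ⟨c, hc⟩
        exact hndvi ⟨c, by rw [hi', hc, pow_succ]; ring⟩
      have hom : ¬ 2 ∣ m' := by
        rintro ⟨c, hc⟩
        exact hndvm ⟨c, by rw [hm', hc, pow_succ]; ring⟩
      have hsum : 2 ∣ m' + i' := by omega
      have hpow : 2 ^ (v + 1) ∣ m + i := by
        obtain ⟨c, hc⟩ := hsum
        refine ⟨c, ?_⟩
        have hmi : m + i = 2 ^ v * (m' + i') := by rw [hm', hi']; ring
        rw [hmi, hc, pow_succ]; ring
      have hdve : 2 ^ v ∣ Nat.gcd i m := Nat.dvd_gcd ⟨i', hi'⟩ ⟨m', hm'⟩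
      obtain ⟨e', he'⟩ := hdve
      have hoe : ¬ 2 ∣ e' := by
        rintro ⟨c, hc⟩
        apply hndvi
        have : 2 ^ (v + 1) ∣ Nat.gcd i m := ⟨c, by rw [he', hc, pow_succ]; ring⟩
        exact this.trans (Nat.gcd_dvd_left i m)
      have hcop : Nat.Coprime (2 ^ (v + 1)) e' :=
        Nat.Coprime.pow_left (v + 1) ((Nat.prime_two.coprime_iff_not_dvd).mpr hoe)
      have hee : e' ∣ m + i := by
        have h7 : Nat.gcd i m ∣ m + i :=
          dvd_add (Nat.gcd_dvd_right i m) (Nat.gcd_dvd_left i m)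
        exact (Dvd.intro_left (2^v) he'.symm).trans h7
      have h8 : 2 ^ (v + 1) * e' ∣ m + i := Nat.Coprime.mul_dvd_of_dvd_of_dvd hcop hpow hee
      have heq : 2 * Nat.gcd i m = 2 ^ (v + 1) * e' := by rw [he', pow_succ]; ring
      rwa [heq]
    · exact mul_dvd_mul_left 2 (Nat.gcd_dvd_right i m)

/-- if `1 ≤ i ≤ m−1`, `v₂(i) = v₂(m)` and `d = gcd(m+i, 2m)`, then `d`
is even and for every `ξ ∈ F_{2^d}` with `ξ^(2^(d/2)+1) = 1`, `ξ ≠ 1`, the element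
`a = (1+ξ)⁻¹` satisfies `a ∉ K_m` and `L_a(y) = 0` for all `y ∈ F_{2^d}`. -/
theorem stmt16 (m : ℕ) (i : ℕ) (hi1 : 1 ≤ i) (hi2 : i ≤ m - 1)
    (hv : padicValNat 2 i = padicValNat 2 m)
    (d : ℕ) (hd : d = Nat.gcd (m + i) (2*m)) :
    Even d ∧
    ∀ ξ : GF (2*m), ξ ^ 2 ^ d = ξ → ξ ^ (2 ^ (d/2) + 1) = 1 → ξ ≠ 1 →
      ((1 + ξ)⁻¹) ^ 2 ^ m ≠ (1 + ξ)⁻¹ ∧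
      ∀ y : GF (2*m), y ^ 2 ^ d = y →
        ((1 + ξ)⁻¹) ^ 2 ^ i * y ^ 2 ^ (2*i)
          + ((1 + ξ)⁻¹ + ((1 + ξ)⁻¹) ^ 2 ^ m) ^ 2 ^ i * y ^ 2 ^ (m + i)
          + (1 + ξ)⁻¹ * y = 0 := by
  have him : i < m := by omega
  have hm0 : 0 < m := by omega
  have hkey : Nat.gcd (m + i) (2*m) = 2 * Nat.gcd i m := key_nt m i hi1 him hv
  have he0 : 0 < Nat.gcd i m := Nat.gcd_pos_of_pos_left m hi1
  have hd2e : d = 2 * Nat.gcd i m := by rw [hd, hkey]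
  have hd0 : 0 < d := by omega
  have hhalf : d / 2 = Nat.gcd i m := by omega
  refine ⟨⟨Nat.gcd i m, by omega⟩, ?_⟩
  intro ξ hξd hξ1 hξne
  have hdm : Nat.gcd d m = Nat.gcd i m := by
    have h2m : Nat.gcd (2*m) m = m := Nat.gcd_eq_right (dvd_mul_left m 2)
    rw [hd, Nat.gcd_assoc, h2m, Nat.add_comm m i, Nat.gcd_add_self_left]
  have hdvmi : d ∣ m + i := by rw [hd]; exact Nat.gcd_dvd_left _ _
  have hbase : (1 + ξ) ^ 2 ^ d = 1 + ξ := by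
    rw [add_pow_char_pow, one_pow, hξd]
  have had : ((1 + ξ)⁻¹) ^ 2 ^ d = (1 + ξ)⁻¹ := by rw [inv_pow, hbase]
  constructor
  · intro hcon
    rw [inv_pow] at hcon
    have hb : (1 + ξ) ^ 2 ^ m = 1 + ξ := inv_injective hcon
    rw [add_pow_char_pow, one_pow] at hb
    have hξm : ξ ^ 2 ^ m = ξ := add_left_cancel hb
    have hgcd : ξ ^ 2 ^ (Nat.gcd d m) = ξ := fixed_gcd ξ hd0 hm0 hξd hξm
    rw [hdm] at hgcd
    rw [pow_add, pow_one, hhalf, hgcd] at hξ1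
    have hsq : (ξ - 1) ^ 2 = 0 := by
      linear_combination hξ1 + (1 - ξ) * (CharTwo.two_eq_zero (R := GF (2*m)))
    have : ξ - 1 = 0 := (pow_eq_zero_iff (by norm_num)).mp hsq
    exact hξne (sub_eq_zero.mp this)
  · intro y hyd
    have h2i : y ^ 2 ^ (2*i) = y :=
      fixed_of_dvd y (by rw [hd2e]; exact mul_dvd_mul_left 2 (Nat.gcd_dvd_left i m)) hyd
    have hmi : y ^ 2 ^ (m+i) = y := fixed_of_dvd y hdvmi hyd
    have hami : ((1 + ξ)⁻¹) ^ 2 ^ (m+i) = (1 + ξ)⁻¹ := fixed_of_dvd _ hdvmi had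
    rw [h2i, hmi, add_pow_char_pow, pow_pow_two', hami]
    linear_combination (((1 + ξ)⁻¹) ^ 2 ^ i * y + (1 + ξ)⁻¹ * y) *
      (CharTwo.two_eq_zero (R := GF (2*m)))
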